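/- Any two distinct intervals in the family 𝒥_p := {J_{p,l} : 1 ≤ l < p} ∪ {J_{p+1,l} : 1 ≤ l < p+1} are at distance at least 1/(20p³) from each other, for every p ≥ 2. -/

import Mathlib

open Real

/-- `ε_{p,l} = 0.1` if `2 ≤ p ≤ 4`, and
`ε_{p,l} = min{0.1, (l+0.1)/(3.92p), (p−l+0.1)/(3.92p)}` if `p ≥ 5`. -/
noncomputable def eps (p l : ℕ) : ℝ :=
  if p ≤ 4 then 0.1
  else min 0.1 (min (((l : ℝ) + 0.1) / (3.92 * p)) (((p : ℝ) - (l : ℝ) + 0.1) / (3.92 * p)))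

/-- `J_{p,l} = {2 cos θ : |θ − lπ/p| ≤ ε_{p,l} π/p}`. -/
noncomputable def Jset (p l : ℕ) : Set ℝ :=
  (fun θ : ℝ => 2 * Real.cos θ) ''
    Set.Icc ((l : ℝ) * π / p - eps p l * π / p) ((l : ℝ) * π / p + eps p l * π / p)

/-- The family `𝒥_p = {J_{p,l} : 1 ≤ l < p} ∪ {J_{p+1,l} : 1 ≤ l < p+1}`. -/
noncomputable def Jfamily (p : ℕ) : Set (Set ℝ) :=
  {S | (∃ l, 1 ≤ l ∧ l < p ∧ S = Jset p l) ∨ (∃ l, 1 ≤ l ∧ l < p + 1 ∧ S = Jset (p + 1) l)}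

/- ### Auxiliary lemmas -/

lemma eps_nonneg' (p l : ℕ) (hl : l ≤ p) : 0 ≤ eps p l := by
  unfold eps
  split
  · norm_num
  · have hp : (0:ℝ) < p := by
      have : ¬ p ≤ 4 := by assumption
      have : 5 ≤ p := by omega
      exact_mod_cast Nat.lt_of_lt_of_le (by norm_num) this
    have hlp : (l:ℝ) ≤ p := by exact_mod_cast hl
    refine le_min (by norm_num) (le_min (by positivity) ?_)
    apply div_nonneg (by linarith) (by positivity)

lemma eps_le_tenth (p l : ℕ) : eps p l ≤ 0.1 := by
  unfold eps; split
  · exact le_rfl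
  · exact min_le_left _ _

lemma eps_le_left (p l : ℕ) (hp : 5 ≤ p) : eps p l ≤ ((l : ℝ) + 0.1) / (3.92 * p) := by
  unfold eps
  rw [if_neg (by omega)]
  exact le_trans (min_le_right _ _) (min_le_left _ _)

lemma eps_le_right (p l : ℕ) (hp : 5 ≤ p) : eps p l ≤ ((p : ℝ) - (l : ℝ) + 0.1) / (3.92 * p) := by
  unfold eps
  rw [if_neg (by omega)]
  exact le_trans (min_le_right _ _) (min_le_right _ _)

lemma sin_lower {t : ℝ} (h0 : 0 ≤ t) (h : t ≤ π) : 2 / π * min t (π - t) ≤ Real.sin t := by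
  have hπ := pi_pos
  rcases le_or_gt t (π / 2) with ht | ht
  · calc 2 / π * min t (π - t)
        ≤ 2 / π * t := mul_le_mul_of_nonneg_left (min_le_left _ _) (by positivity)
      _ ≤ Real.sin t := Real.mul_le_sin h0 ht
  · calc 2 / π * min t (π - t)
        ≤ 2 / π * (π - t) := mul_le_mul_of_nonneg_left (min_le_right _ _) (by positivity)
      _ ≤ Real.sin (π - t) := Real.mul_le_sin (by linarith) (by linarith)
      _ = Real.sin t := Real.sin_pi_sub t

lemma cos_gap {a b : ℝ} (h0 : 0 ≤ a) (hab : a ≤ b) (hb : b ≤ π) :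
    4 / π ^ 2 * ((b - a) * min a (π - b)) ≤ Real.cos a - Real.cos b := by
  have hπ := pi_pos
  have hid : Real.cos a - Real.cos b
      = 2 * (Real.sin ((a + b) / 2) * Real.sin ((b - a) / 2)) := by
    rw [Real.cos_sub_cos, show (a - b) / 2 = -((b - a) / 2) by ring, Real.sin_neg]; ring
  have h1 : 2 / π * ((b - a) / 2) ≤ Real.sin ((b - a) / 2) :=
    Real.mul_le_sin (by linarith) (by linarith)
  have h2 : 2 / π * min a (π - b) ≤ Real.sin ((a + b) / 2) := by
    refine le_trans ?_ (sin_lower (by linarith) (by linarith))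
    apply mul_le_mul_of_nonneg_left _ (by positivity)
    exact le_min (le_trans (min_le_left _ _) (by linarith))
      (le_trans (min_le_right _ _) (by linarith))
  have hm0 : (0:ℝ) ≤ 2 / π * min a (π - b) :=
    mul_nonneg (by positivity) (le_min h0 (by linarith))
  have hc0 : (0:ℝ) ≤ 2 / π * ((b - a) / 2) := mul_nonneg (by positivity) (by linarith)
  have key := mul_le_mul h2 h1 hc0 (le_trans hm0 h2)
  have heq : 4 / π ^ 2 * ((b - a) * min a (π - b))
      = 2 * ((2 / π * min a (π - b)) * (2 / π * ((b - a) / 2))) := by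
    field_simp
    ring
  rw [hid, heq]
  linarith

/-- one-sided core estimate -/
lemma core_one {γ1 ω1 γ2 ω2 d e θ1 θ2 : ℝ}
    (he : 0 ≤ e) (hd : 0 ≤ d)
    (he1 : e ≤ γ1 - ω1) (he4 : γ2 + ω2 ≤ 1 - e)
    (hord : ω1 + ω2 + d ≤ γ2 - γ1)
    (hθ1 : π * (γ1 - ω1) ≤ θ1) (hθ1' : θ1 ≤ π * (γ1 + ω1))
    (hθ2 : π * (γ2 - ω2) ≤ θ2) (hθ2' : θ2 ≤ π * (γ2 + ω2)) :
    8 * (d * e) ≤ 2 * Real.cos θ1 - 2 * Real.cos θ2 := by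
  have hπ := pi_pos
  have k1 : π * e ≤ π * (γ1 - ω1) := mul_le_mul_of_nonneg_left he1 hπ.le
  have k4 : π * (γ2 + ω2) ≤ π * (1 - e) := mul_le_mul_of_nonneg_left he4 hπ.le
  have kord : π * (ω1 + ω2 + d) ≤ π * (γ2 - γ1) := mul_le_mul_of_nonneg_left hord hπ.le
  have hπe : 0 ≤ π * e := by positivity
  have h0 : 0 ≤ θ1 := by nlinarith
  have hab : θ1 ≤ θ2 := by nlinarith
  have hb : θ2 ≤ π := by nlinarith
  have hgap : π * d ≤ θ2 - θ1 := by nlinarith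
  have hm : π * e ≤ min θ1 (π - θ2) := by
    apply le_min
    · linarith
    · nlinarith
  have hkey := cos_gap h0 hab hb
  have hprod : (π * d) * (π * e) ≤ (θ2 - θ1) * min θ1 (π - θ2) :=
    mul_le_mul hgap hm hπe (by linarith)
  have hmul : 4 / π ^ 2 * ((π * d) * (π * e)) ≤ 4 / π ^ 2 * ((θ2 - θ1) * min θ1 (π - θ2)) :=
    mul_le_mul_of_nonneg_left hprod (by positivity)
  have heq : 4 / π ^ 2 * ((π * d) * (π * e)) = 4 * (d * e) := by
    field_simp
  rw [heq] at hmul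
  linarith

lemma core {γ1 ω1 γ2 ω2 d e θ1 θ2 : ℝ}
    (he : 0 ≤ e) (hd : 0 ≤ d)
    (he1 : e ≤ γ1 - ω1) (he2 : e ≤ γ2 - ω2)
    (he3 : γ1 + ω1 ≤ 1 - e) (he4 : γ2 + ω2 ≤ 1 - e)
    (hord : ω1 + ω2 + d ≤ |γ1 - γ2|)
    (hθ1 : π * (γ1 - ω1) ≤ θ1) (hθ1' : θ1 ≤ π * (γ1 + ω1))
    (hθ2 : π * (γ2 - ω2) ≤ θ2) (hθ2' : θ2 ≤ π * (γ2 + ω2)) :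
    8 * (d * e) ≤ |2 * Real.cos θ1 - 2 * Real.cos θ2| := by
  rcases abs_cases (γ1 - γ2) with ⟨habs, hsign⟩ | ⟨habs, hsign⟩
  · rw [habs] at hord
    have h := core_one he hd he2 he3 (by linarith) hθ2 hθ2' hθ1 hθ1'
    calc 8 * (d * e) ≤ 2 * Real.cos θ2 - 2 * Real.cos θ1 := h
      _ ≤ |2 * Real.cos θ2 - 2 * Real.cos θ1| := le_abs_self _
      _ = |2 * Real.cos θ1 - 2 * Real.cos θ2| := abs_sub_comm _ _
  · rw [habs] at hord
    have h := core_one he hd he1 he4 (by linarith) hθ1 hθ1' hθ2 hθ2'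
    exact le_trans h (le_abs_self _)

lemma frac_le {Q A B : ℝ} (hQ : 0 < Q) (h : A ≤ B) : A / Q ≤ B / Q :=
  div_le_div_of_nonneg_right h hQ.le

lemma sep_same (p q l1 l2 : ℕ) (hp : 2 ≤ p) (hq1 : p ≤ q) (hq2 : q ≤ p + 1)
    (h11 : 1 ≤ l1) (h12 : l1 < q) (h21 : 1 ≤ l2) (h22 : l2 < q) (hne : l1 ≠ l2) :
    ∀ x ∈ Jset q l1, ∀ y ∈ Jset q l2, 1 / (20 * (p : ℝ) ^ 3) ≤ |x - y| := by
  intro x hx y hy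
  obtain ⟨θ1, hθ1, rfl⟩ := hx
  obtain ⟨θ2, hθ2, rfl⟩ := hy
  have hq2' : 2 ≤ q := le_trans hp hq1
  have hQ : (0:ℝ) < (q:ℝ) := by exact_mod_cast (show 0 < q by omega)
  have hP2 : (2:ℝ) ≤ (p:ℝ) := by exact_mod_cast hp
  have hQP : (q:ℝ) ≤ (p:ℝ) + 1 := by exact_mod_cast hq2
  have hE10 : 0 ≤ eps q l1 := eps_nonneg' q l1 (le_of_lt h12)
  have hE20 : 0 ≤ eps q l2 := eps_nonneg' q l2 (le_of_lt h22)
  have hE1 : eps q l1 ≤ 0.1 := eps_le_tenth q l1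
  have hE2 : eps q l2 ≤ 0.1 := eps_le_tenth q l2
  have hL11 : (1:ℝ) ≤ (l1:ℝ) := by exact_mod_cast h11
  have hL21 : (1:ℝ) ≤ (l2:ℝ) := by exact_mod_cast h21
  have hL12 : (l1:ℝ) + 1 ≤ (q:ℝ) := by exact_mod_cast h12
  have hL22 : (l2:ℝ) + 1 ≤ (q:ℝ) := by exact_mod_cast h22
  have hsep : (1:ℝ) ≤ |(l1:ℝ) - (l2:ℝ)| := by
    rcases lt_or_gt_of_ne hne with h | h
    · have : (l1:ℝ) + 1 ≤ (l2:ℝ) := by exact_mod_cast h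
      rw [abs_sub_comm, abs_of_nonneg (by linarith)]; linarith
    · have : (l2:ℝ) + 1 ≤ (l1:ℝ) := by exact_mod_cast h
      rw [abs_of_nonneg (by linarith)]; linarith
  have key : 8 * ((0.8 / (q:ℝ)) * (0.9 / (q:ℝ)))
      ≤ |2 * Real.cos θ1 - 2 * Real.cos θ2| := by
    apply core (γ1 := (l1:ℝ)/(q:ℝ)) (ω1 := eps q l1/(q:ℝ))
        (γ2 := (l2:ℝ)/(q:ℝ)) (ω2 := eps q l2/(q:ℝ))
    · positivity
    · positivity
    · have h := frac_le hQ (show (0.9:ℝ) ≤ (l1:ℝ) - eps q l1 by linarith)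
      have e : ((l1:ℝ) - eps q l1)/(q:ℝ) = (l1:ℝ)/(q:ℝ) - eps q l1/(q:ℝ) := by ring
      linarith
    · have h := frac_le hQ (show (0.9:ℝ) ≤ (l2:ℝ) - eps q l2 by linarith)
      have e : ((l2:ℝ) - eps q l2)/(q:ℝ) = (l2:ℝ)/(q:ℝ) - eps q l2/(q:ℝ) := by ring
      linarith
    · have h := frac_le hQ (show (l1:ℝ) + eps q l1 ≤ (q:ℝ) - 0.9 by linarith)
      have e1 : ((l1:ℝ) + eps q l1)/(q:ℝ) = (l1:ℝ)/(q:ℝ) + eps q l1/(q:ℝ) := by ring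
      have e2 : ((q:ℝ) - 0.9)/(q:ℝ) = 1 - 0.9/(q:ℝ) := by field_simp
      linarith
    · have h := frac_le hQ (show (l2:ℝ) + eps q l2 ≤ (q:ℝ) - 0.9 by linarith)
      have e1 : ((l2:ℝ) + eps q l2)/(q:ℝ) = (l2:ℝ)/(q:ℝ) + eps q l2/(q:ℝ) := by ring
      have e2 : ((q:ℝ) - 0.9)/(q:ℝ) = 1 - 0.9/(q:ℝ) := by field_simp
      linarith
    · have e : (l1:ℝ)/(q:ℝ) - (l2:ℝ)/(q:ℝ) = ((l1:ℝ) - (l2:ℝ))/(q:ℝ) := by ring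
      rw [e, abs_div, abs_of_pos hQ]
      have h := frac_le hQ (show eps q l1 + eps q l2 + 0.8 ≤ |(l1:ℝ) - (l2:ℝ)| by linarith)
      have e1 : (eps q l1 + eps q l2 + 0.8)/(q:ℝ)
          = eps q l1/(q:ℝ) + eps q l2/(q:ℝ) + 0.8/(q:ℝ) := by ring
      linarith
    · have e : π * ((l1:ℝ)/(q:ℝ) - eps q l1/(q:ℝ))
          = (l1:ℝ) * π / (q:ℝ) - eps q l1 * π / (q:ℝ) := by ring
      linarith [hθ1.1]
    · have e : π * ((l1:ℝ)/(q:ℝ) + eps q l1/(q:ℝ))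
          = (l1:ℝ) * π / (q:ℝ) + eps q l1 * π / (q:ℝ) := by ring
      linarith [hθ1.2]
    · have e : π * ((l2:ℝ)/(q:ℝ) - eps q l2/(q:ℝ))
          = (l2:ℝ) * π / (q:ℝ) - eps q l2 * π / (q:ℝ) := by ring
      linarith [hθ2.1]
    · have e : π * ((l2:ℝ)/(q:ℝ) + eps q l2/(q:ℝ))
          = (l2:ℝ) * π / (q:ℝ) + eps q l2 * π / (q:ℝ) := by ring
      linarith [hθ2.2]
  refine le_trans ?_ key
  have e : 8 * ((0.8 / (q:ℝ)) * (0.9 / (q:ℝ))) = 5.76 / (q:ℝ)^2 := by ring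
  rw [e, div_le_div_iff₀ (by positivity) (by positivity)]
  nlinarith [mul_le_mul hQP hQP hQ.le (by linarith : (0:ℝ) ≤ (p:ℝ) + 1),
    mul_le_mul hP2 hP2 (by norm_num) (by linarith : (0:ℝ) ≤ (p:ℝ)),
    mul_pos (mul_pos (lt_of_lt_of_le (by norm_num) hP2) (lt_of_lt_of_le (by norm_num) hP2))
      (lt_of_lt_of_le (by norm_num) hP2)]

lemma natAbs_facts (p l1 l2 : ℕ) (h11 : 1 ≤ l1) (h12 : l1 < p) (h21 : 1 ≤ l2)
    (h22 : l2 < p + 1) :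
    1 ≤ ((l1:ℤ) * (p+1) - l2 * p).natAbs ∧
      min l1 (p - l1) ≤ ((l1:ℤ) * (p+1) - l2 * p).natAbs ∧
      min l2 (p + 1 - l2) ≤ ((l1:ℤ) * (p+1) - l2 * p).natAbs := by
  set δ : ℤ := (l1:ℤ) * (p+1) - l2 * p with hδdef
  set t : ℤ := (l1:ℤ) - l2 with htdef
  have hδ1 : δ = (l1:ℤ) + (p:ℤ) * t := by rw [hδdef, htdef]; ring
  have hδ2 : δ = (l2:ℤ) + ((p:ℤ) + 1) * t := by rw [hδdef, htdef]; push_cast; ring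
  have habs : |δ| = (δ.natAbs : ℤ) := Int.abs_eq_natAbs δ
  have hl1p : (l1:ℤ) < (p:ℤ) := by exact_mod_cast h12
  have hl2p : (l2:ℤ) < (p:ℤ) + 1 := by exact_mod_cast (show (l2:ℤ) < ((p:ℕ)+1 : ℕ) from by exact_mod_cast h22)
  have hl11 : (1:ℤ) ≤ (l1:ℤ) := by exact_mod_cast h11
  have hl21 : (1:ℤ) ≤ (l2:ℤ) := by exact_mod_cast h21
  have hp0 : (0:ℤ) ≤ (p:ℤ) := by positivity
  rcases lt_trichotomy t 0 with ht | ht | ht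
  · have ht1 : t ≤ -1 := by omega
    have hpt : (p:ℤ) * t ≤ (p:ℤ) * (-1) := mul_le_mul_of_nonneg_left ht1 hp0
    have hpt2 : ((p:ℤ) + 1) * t ≤ ((p:ℤ) + 1) * (-1) :=
      mul_le_mul_of_nonneg_left ht1 (by linarith)
    have hδneg : δ < 0 := by rw [hδ1]; linarith
    have hk : (δ.natAbs : ℤ) = -δ := by rw [← habs, abs_of_neg hδneg]
    have hge1 : (p:ℤ) - l1 ≤ (δ.natAbs : ℤ) := by rw [hk, hδ1]; linarith
    have hge2 : (p:ℤ) + 1 - l2 ≤ (δ.natAbs : ℤ) := by rw [hk, hδ2]; linarith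
    refine ⟨by omega, by omega, by omega⟩
  · have hδeq : δ = (l1:ℤ) := by rw [hδ1, ht]; ring
    have hk : (δ.natAbs : ℤ) = (l1:ℤ) := by
      rw [← habs, hδeq, abs_of_nonneg (by linarith)]
    have hl12 : (l1:ℤ) = (l2:ℤ) := by omega
    refine ⟨by omega, by omega, by omega⟩
  · have ht1 : 1 ≤ t := by omega
    have hpt : (p:ℤ) * 1 ≤ (p:ℤ) * t := mul_le_mul_of_nonneg_left ht1 hp0
    have hpt2 : ((p:ℤ) + 1) * 1 ≤ ((p:ℤ) + 1) * t :=
      mul_le_mul_of_nonneg_left ht1 (by linarith)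
    have hδpos : 0 < δ := by rw [hδ1]; linarith
    have hk : (δ.natAbs : ℤ) = δ := by rw [← habs, abs_of_pos hδpos]
    have hge1 : (l1:ℤ) + p ≤ (δ.natAbs : ℤ) := by rw [hk, hδ1]; linarith
    have hge2 : (l2:ℤ) + (p + 1) ≤ (δ.natAbs : ℤ) := by rw [hk, hδ2]; linarith
    refine ⟨by omega, by omega, by omega⟩

set_option maxHeartbeats 2000000 in
lemma sep_mixed (p l1 l2 : ℕ) (hp : 2 ≤ p) (h11 : 1 ≤ l1) (h12 : l1 < p)
    (h21 : 1 ≤ l2) (h22 : l2 < p + 1) :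
    ∀ x ∈ Jset p l1, ∀ y ∈ Jset (p+1) l2, 1 / (20 * (p : ℝ) ^ 3) ≤ |x - y| := by
  intro x hx y hy
  obtain ⟨θ1, hθ1, rfl⟩ := hx
  obtain ⟨θ2, hθ2, rfl⟩ := hy
  obtain ⟨hk1, hkΛ, hkM⟩ := natAbs_facts p l1 l2 h11 h12 h21 h22
  set k : ℕ := ((l1:ℤ) * (p+1) - l2 * p).natAbs with hk
  have hP0 : (0:ℝ) < (p:ℝ) := by exact_mod_cast (show 0 < p by omega)
  have hP1 : (0:ℝ) < (p:ℝ) + 1 := by linarith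
  have hR : (0:ℝ) < (p:ℝ) * ((p:ℝ) + 1) := mul_pos hP0 hP1
  have hP2 : (2:ℝ) ≤ (p:ℝ) := by exact_mod_cast hp
  have hL11 : (1:ℝ) ≤ (l1:ℝ) := by exact_mod_cast h11
  have hL12 : (l1:ℝ) + 1 ≤ (p:ℝ) := by exact_mod_cast h12
  have hL21 : (1:ℝ) ≤ (l2:ℝ) := by exact_mod_cast h21
  have hL22 : (l2:ℝ) ≤ (p:ℝ) := by exact_mod_cast (show l2 ≤ p by omega)
  have hK1 : (1:ℝ) ≤ (k:ℝ) := by exact_mod_cast hk1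
  have hE10 : 0 ≤ eps p l1 := eps_nonneg' p l1 (le_of_lt h12)
  have hE20 : 0 ≤ eps (p+1) l2 := eps_nonneg' (p+1) l2 (le_of_lt h22)
  have hE1 : eps p l1 ≤ 0.1 := eps_le_tenth p l1
  have hE2 : eps (p+1) l2 ≤ 0.1 := eps_le_tenth (p+1) l2
  have hcastp1 : ((p+1 : ℕ) : ℝ) = (p:ℝ) + 1 := by push_cast; ring
  have habsk : |(l1:ℝ) * ((p:ℝ)+1) - (l2:ℝ) * (p:ℝ)| = (k:ℝ) := by
    have hδcast : (l1:ℝ) * ((p:ℝ)+1) - (l2:ℝ) * (p:ℝ)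
        = (((l1:ℤ) * (p+1) - l2 * p : ℤ) : ℝ) := by push_cast; ring
    rw [hδcast, ← Int.cast_abs, Int.abs_eq_natAbs, ← hk]
    norm_cast
  -- the angular positions used in `core`
  set R : ℝ := (p:ℝ) * ((p:ℝ) + 1) with hRdef
  have hγω1m : ∀ E : ℝ, π * ((l1:ℝ) * ((p:ℝ)+1) / R - E * ((p:ℝ)+1) / R)
      = (l1:ℝ) * π / (p:ℝ) - E * π / (p:ℝ) := by
    intro E; rw [hRdef]; field_simp
  have hγω1p : ∀ E : ℝ, π * ((l1:ℝ) * ((p:ℝ)+1) / R + E * ((p:ℝ)+1) / R)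
      = (l1:ℝ) * π / (p:ℝ) + E * π / (p:ℝ) := by
    intro E; rw [hRdef]; field_simp
  have hγω2m : ∀ E : ℝ, π * ((l2:ℝ) * (p:ℝ) / R - E * (p:ℝ) / R)
      = (l2:ℝ) * π / ((p:ℝ)+1) - E * π / ((p:ℝ)+1) := by
    intro E; rw [hRdef]; field_simp
  have hγω2p : ∀ E : ℝ, π * ((l2:ℝ) * (p:ℝ) / R + E * (p:ℝ) / R)
      = (l2:ℝ) * π / ((p:ℝ)+1) + E * π / ((p:ℝ)+1) := by
    intro E; rw [hRdef]; field_simp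
  have hθ11 : (l1:ℝ) * π / (p:ℝ) - eps p l1 * π / (p:ℝ) ≤ θ1 := hθ1.1
  have hθ12 : θ1 ≤ (l1:ℝ) * π / (p:ℝ) + eps p l1 * π / (p:ℝ) := hθ1.2
  have hθ21 : (l2:ℝ) * π / ((p:ℝ)+1) - eps (p+1) l2 * π / ((p:ℝ)+1) ≤ θ2 := by
    have := hθ2.1; rwa [hcastp1] at this
  have hθ22 : θ2 ≤ (l2:ℝ) * π / ((p:ℝ)+1) + eps (p+1) l2 * π / ((p:ℝ)+1) := by
    have := hθ2.2; rwa [hcastp1] at this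
  have hγdiff : (l1:ℝ) * ((p:ℝ)+1) / R - (l2:ℝ) * (p:ℝ) / R
      = ((l1:ℝ) * ((p:ℝ)+1) - (l2:ℝ) * (p:ℝ)) / R := by ring
  rcases le_or_gt p 4 with hple | hpge
  · -- small case : p ≤ 4, use plain bound eps ≤ 0.1
    have hP4 : (p:ℝ) ≤ 4 := by exact_mod_cast hple
    have key : 8 * ((0.1 / R) * (0.9 * (p:ℝ) / R))
        ≤ |2 * Real.cos θ1 - 2 * Real.cos θ2| := by
      apply core (γ1 := (l1:ℝ) * ((p:ℝ)+1) / R) (ω1 := eps p l1 * ((p:ℝ)+1) / R)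
          (γ2 := (l2:ℝ) * (p:ℝ) / R) (ω2 := eps (p+1) l2 * (p:ℝ) / R)
      · rw [hRdef]; positivity
      · rw [hRdef]; positivity
      · have h := frac_le hR (show 0.9 * (p:ℝ) ≤ ((l1:ℝ) - eps p l1) * ((p:ℝ)+1) by
          linarith [mul_le_mul_of_nonneg_right (show (0.9:ℝ) ≤ (l1:ℝ) - eps p l1 by linarith) hP1.le])
        have e : (((l1:ℝ) - eps p l1) * ((p:ℝ)+1)) / R
            = (l1:ℝ) * ((p:ℝ)+1) / R - eps p l1 * ((p:ℝ)+1) / R := by ring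
        linarith
      · have h := frac_le hR (show 0.9 * (p:ℝ) ≤ ((l2:ℝ) - eps (p+1) l2) * (p:ℝ) by
          linarith [mul_le_mul_of_nonneg_right
            (show (0.9:ℝ) ≤ (l2:ℝ) - eps (p+1) l2 by linarith) hP0.le])
        have e : (((l2:ℝ) - eps (p+1) l2) * (p:ℝ)) / R
            = (l2:ℝ) * (p:ℝ) / R - eps (p+1) l2 * (p:ℝ) / R := by ring
        linarith
      · have h := frac_le hR (show ((l1:ℝ) + eps p l1) * ((p:ℝ)+1)
            ≤ (p:ℝ) * ((p:ℝ)+1) - 0.9 * (p:ℝ) by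
          linarith [mul_le_mul_of_nonneg_right
            (show (l1:ℝ) + eps p l1 ≤ (p:ℝ) - 0.9 by linarith) hP1.le])
        have e1 : (((l1:ℝ) + eps p l1) * ((p:ℝ)+1)) / R
            = (l1:ℝ) * ((p:ℝ)+1) / R + eps p l1 * ((p:ℝ)+1) / R := by ring
        have e2 : ((p:ℝ) * ((p:ℝ)+1) - 0.9 * (p:ℝ)) / R = 1 - 0.9 * (p:ℝ) / R := by
          rw [hRdef]; field_simp
        linarith
      · have h := frac_le hR (show ((l2:ℝ) + eps (p+1) l2) * (p:ℝ)
            ≤ (p:ℝ) * ((p:ℝ)+1) - 0.9 * (p:ℝ) by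
          linarith [mul_nonneg (show (0:ℝ) ≤ (p:ℝ)+1 - (l2:ℝ) - eps (p+1) l2 - 0.9 by linarith) hP0.le])
        have e1 : (((l2:ℝ) + eps (p+1) l2) * (p:ℝ)) / R
            = (l2:ℝ) * (p:ℝ) / R + eps (p+1) l2 * (p:ℝ) / R := by ring
        have e2 : ((p:ℝ) * ((p:ℝ)+1) - 0.9 * (p:ℝ)) / R = 1 - 0.9 * (p:ℝ) / R := by
          rw [hRdef]; field_simp
        linarith
      · rw [hγdiff, abs_div, abs_of_pos hR, habsk]
        have h := frac_le hR (show eps p l1 * ((p:ℝ)+1) + eps (p+1) l2 * (p:ℝ) + 0.1 ≤ (k:ℝ) by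
          linarith [mul_le_mul_of_nonneg_right hE1 hP1.le,
            mul_le_mul_of_nonneg_right hE2 hP0.le])
        have e1 : (eps p l1 * ((p:ℝ)+1) + eps (p+1) l2 * (p:ℝ) + 0.1) / R
            = eps p l1 * ((p:ℝ)+1) / R + eps (p+1) l2 * (p:ℝ) / R + 0.1 / R := by ring
        linarith
      · rw [hγω1m]; exact hθ11
      · rw [hγω1p]; exact hθ12
      · rw [hγω2m]; exact hθ21
      · rw [hγω2p]; exact hθ22
    refine le_trans ?_ key
    have e : 8 * ((0.1 / R) * (0.9 * (p:ℝ) / R)) = 0.72 / ((p:ℝ) * ((p:ℝ)+1)^2) := by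
      rw [hRdef]; field_simp; ring
    rw [e, div_le_div_iff₀ (by positivity) (by positivity)]
    linarith [mul_nonneg (show (0:ℝ) ≤ (p:ℝ) - 2 by linarith) (sq_nonneg (p:ℝ)),
      mul_nonneg (show (0:ℝ) ≤ (p:ℝ) - 1 by linarith) hP0.le]
  · -- big case : p ≥ 5, refined eps bounds
    have hp5 : 5 ≤ p := by omega
    have hP5 : (5:ℝ) ≤ (p:ℝ) := by exact_mod_cast hp5
    set Λ : ℝ := ((min l1 (p - l1) : ℕ) : ℝ) with hΛdef
    set M : ℝ := ((min l2 (p + 1 - l2) : ℕ) : ℝ) with hMdef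
    have hΛ1 : (1:ℝ) ≤ Λ := by
      rw [hΛdef]; exact_mod_cast (show 1 ≤ min l1 (p - l1) by omega)
    have hM1 : (1:ℝ) ≤ M := by
      rw [hMdef]; exact_mod_cast (show 1 ≤ min l2 (p + 1 - l2) by omega)
    have hΛK : Λ ≤ (k:ℝ) := by rw [hΛdef]; exact_mod_cast hkΛ
    have hMK : M ≤ (k:ℝ) := by rw [hMdef]; exact_mod_cast hkM
    have hΛl1 : Λ ≤ (l1:ℝ) := by
      rw [hΛdef]; exact_mod_cast Nat.cast_le.mpr (min_le_left l1 (p - l1))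
    have hΛr : Λ ≤ (p:ℝ) - (l1:ℝ) := by
      have h := Nat.cast_le (α := ℝ) |>.mpr (min_le_right l1 (p - l1))
      rw [Nat.cast_sub (le_of_lt h12)] at h
      rw [hΛdef]; exact_mod_cast h
    have hMl2 : M ≤ (l2:ℝ) := by
      rw [hMdef]; exact_mod_cast Nat.cast_le.mpr (min_le_left l2 (p + 1 - l2))
    have hMr : M ≤ (p:ℝ) + 1 - (l2:ℝ) := by
      have h := Nat.cast_le (α := ℝ) |>.mpr (min_le_right l2 (p + 1 - l2))
      rw [Nat.cast_sub (by omega)] at h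
      rw [hMdef]; push_cast at h ⊢; linarith
    have hA1 : eps p l1 * (3.92 * (p:ℝ)) ≤ Λ + 0.1 := by
      rcases le_total l1 (p - l1) with h | h
      · have hmin : min l1 (p - l1) = l1 := min_eq_left h
        have h2 := eps_le_left p l1 hp5
        rw [hΛdef, hmin]
        exact (le_div_iff₀ (by positivity)).mp h2
      · have hmin : min l1 (p - l1) = p - l1 := min_eq_right h
        have h2 := eps_le_right p l1 hp5
        rw [hΛdef, hmin, Nat.cast_sub (le_of_lt h12)]
        exact (le_div_iff₀ (by positivity)).mp h2
    have hA2 : eps (p+1) l2 * (3.92 * ((p:ℝ)+1)) ≤ M + 0.1 := by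
      have hp51 : 5 ≤ p + 1 := by omega
      rcases le_total l2 (p + 1 - l2) with h | h
      · have hmin : min l2 (p + 1 - l2) = l2 := min_eq_left h
        have h2 := eps_le_left (p+1) l2 hp51
        rw [hcastp1] at h2
        rw [hMdef, hmin]
        exact (le_div_iff₀ (by positivity)).mp h2
      · have hmin : min l2 (p + 1 - l2) = p + 1 - l2 := min_eq_right h
        have h2 := eps_le_right (p+1) l2 hp51
        rw [hcastp1] at h2
        rw [hMdef, hmin, Nat.cast_sub (by omega)]
        push_cast
        push_cast at h2
        exact (le_div_iff₀ (by positivity)).mp h2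
    set s : ℝ := min Λ M with hsdef
    have hs1 : (1:ℝ) ≤ s := le_min hΛ1 hM1
    have hsΛ : s ≤ Λ := min_le_left _ _
    have hsM : s ≤ M := min_le_right _ _
    have key : 8 * ((0.38 * (k:ℝ) / R) * (0.9 * s * (p:ℝ) / R))
        ≤ |2 * Real.cos θ1 - 2 * Real.cos θ2| := by
      apply core (γ1 := (l1:ℝ) * ((p:ℝ)+1) / R) (ω1 := eps p l1 * ((p:ℝ)+1) / R)
          (γ2 := (l2:ℝ) * (p:ℝ) / R) (ω2 := eps (p+1) l2 * (p:ℝ) / R)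
      · exact div_nonneg (by linarith [mul_nonneg (show (0:ℝ) ≤ 0.9 * s by linarith) hP0.le]) hR.le
      · exact div_nonneg (by linarith) hR.le
      · have h := frac_le hR (show 0.9 * s * (p:ℝ) ≤ ((l1:ℝ) - eps p l1) * ((p:ℝ)+1) by
          linarith [mul_le_mul_of_nonneg_right (show s ≤ (l1:ℝ) by linarith) hP0.le,
            mul_le_mul_of_nonneg_right (show eps p l1 ≤ 0.1 from hE1) hP0.le,
            mul_le_mul_of_nonneg_right hL11 hP0.le])
        have e : (((l1:ℝ) - eps p l1) * ((p:ℝ)+1)) / R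
            = (l1:ℝ) * ((p:ℝ)+1) / R - eps p l1 * ((p:ℝ)+1) / R := by ring
        linarith
      · have h := frac_le hR (show 0.9 * s * (p:ℝ) ≤ ((l2:ℝ) - eps (p+1) l2) * (p:ℝ) by
          linarith [mul_le_mul_of_nonneg_right
            (show 0.9 * s + eps (p+1) l2 ≤ (l2:ℝ) by linarith) hP0.le])
        have e : (((l2:ℝ) - eps (p+1) l2) * (p:ℝ)) / R
            = (l2:ℝ) * (p:ℝ) / R - eps (p+1) l2 * (p:ℝ) / R := by ring
        linarith
      · have h := frac_le hR (show ((l1:ℝ) + eps p l1) * ((p:ℝ)+1)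
            ≤ (p:ℝ) * ((p:ℝ)+1) - 0.9 * s * (p:ℝ) by
          linarith [mul_nonneg (show (0:ℝ) ≤ (p:ℝ) - (l1:ℝ) - s by linarith) hP0.le,
            mul_nonneg (show (0:ℝ) ≤ (p:ℝ) - 1 - (l1:ℝ) by linarith) hP0.le,
            mul_nonneg (show (0:ℝ) ≤ 0.1 - eps p l1 by linarith) hP0.le])
        have e1 : (((l1:ℝ) + eps p l1) * ((p:ℝ)+1)) / R
            = (l1:ℝ) * ((p:ℝ)+1) / R + eps p l1 * ((p:ℝ)+1) / R := by ring
        have e2 : ((p:ℝ) * ((p:ℝ)+1) - 0.9 * s * (p:ℝ)) / R = 1 - 0.9 * s * (p:ℝ) / R := by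
          rw [hRdef]; field_simp
        linarith
      · have h := frac_le hR (show ((l2:ℝ) + eps (p+1) l2) * (p:ℝ)
            ≤ (p:ℝ) * ((p:ℝ)+1) - 0.9 * s * (p:ℝ) by
          linarith [mul_nonneg
            (show (0:ℝ) ≤ (p:ℝ) + 1 - (l2:ℝ) - eps (p+1) l2 - 0.9 * s by linarith) hP0.le])
        have e1 : (((l2:ℝ) + eps (p+1) l2) * (p:ℝ)) / R
            = (l2:ℝ) * (p:ℝ) / R + eps (p+1) l2 * (p:ℝ) / R := by ring
        have e2 : ((p:ℝ) * ((p:ℝ)+1) - 0.9 * s * (p:ℝ)) / R = 1 - 0.9 * s * (p:ℝ) / R := by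
          rw [hRdef]; field_simp
        linarith
      · rw [hγdiff, abs_div, abs_of_pos hR, habsk]
        have h := frac_le hR (show eps p l1 * ((p:ℝ)+1) + eps (p+1) l2 * (p:ℝ)
              + 0.38 * (k:ℝ) ≤ (k:ℝ) by
          linarith [mul_nonneg hE10 (show (0:ℝ) ≤ 0.2 * (p:ℝ) - 1 by linarith), hA1, hA2])
        have e1 : (eps p l1 * ((p:ℝ)+1) + eps (p+1) l2 * (p:ℝ) + 0.38 * (k:ℝ)) / R
            = eps p l1 * ((p:ℝ)+1) / R + eps (p+1) l2 * (p:ℝ) / R + 0.38 * (k:ℝ) / R := by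
          ring
        linarith
      · rw [hγω1m]; exact hθ11
      · rw [hγω1p]; exact hθ12
      · rw [hγω2m]; exact hθ21
      · rw [hγω2p]; exact hθ22
    refine le_trans ?_ key
    have e : 8 * ((0.38 * (k:ℝ) / R) * (0.9 * s * (p:ℝ) / R))
        = 2.736 * ((k:ℝ) * s) / ((p:ℝ) * ((p:ℝ)+1)^2) := by
      rw [hRdef]; field_simp; ring
    rw [e, div_le_div_iff₀ (by positivity) (by positivity)]
    have hKs : (1:ℝ) ≤ (k:ℝ) * s := by
      linarith [mul_le_mul hK1 hs1 (by norm_num : (0:ℝ) ≤ 1) (by linarith : (0:ℝ) ≤ (k:ℝ))]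
    linarith [mul_le_mul_of_nonneg_left hKs (show (0:ℝ) ≤ 54.72 * (p:ℝ)^3 by positivity),
      mul_nonneg (show (0:ℝ) ≤ (p:ℝ) - 5 by linarith) (sq_nonneg (p:ℝ)),
      mul_nonneg (show (0:ℝ) ≤ (p:ℝ) - 1 by linarith) hP0.le]

/-- For `p ≥ 2`, any two distinct intervals of `𝒥_p` are at distance at least `1/(20p³)`:
every point of one is at distance at least `1/(20p³)` from every point of the other. -/
theorem Jfamily_gap (p : ℕ) (hp : 2 ≤ p) :
    ∀ S ∈ Jfamily p, ∀ T ∈ Jfamily p, S ≠ T →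
      ∀ x ∈ S, ∀ y ∈ T, 1 / (20 * (p : ℝ) ^ 3) ≤ |x - y| := by
  intro S hS T hT hST x hx y hy
  simp only [Jfamily, Set.mem_setOf_eq] at hS hT
  rcases hS with ⟨l1, h11, h12, rfl⟩ | ⟨l1, h11, h12, rfl⟩ <;>
    rcases hT with ⟨l2, h21, h22, rfl⟩ | ⟨l2, h21, h22, rfl⟩
  · exact sep_same p p l1 l2 hp le_rfl (by omega) h11 h12 h21 h22
      (fun h => hST (by rw [h])) x hx y hy
  · exact sep_mixed p l1 l2 hp h11 h12 h21 h22 x hx y hy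
  · rw [abs_sub_comm]
    exact sep_mixed p l2 l1 hp h21 h22 h11 h12 y hy x hx
  · exact sep_same p (p+1) l1 l2 hp (by omega) le_rfl h11 h12 h21 h22
      (fun h => hST (by rw [h])) x hx y hy
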